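/- With U as in the previous counterexample and A the symmetric matrix with entries a₁₁ = a₁₂ = 0, a₂₂ = 1, one has Z[A, U∘P] = ∫_{ℝ²} exp(-½x₂² - |x₁|⁴) dx < ∞, where P = diag(1,0), but for every j ≥ 1, Z[A, U∘T_j] = ∫_{ℝ²} exp(-½x₂² - U(x₁, j^{-1}x₂)) dx = +∞, where T_j = diag(1, j^{-1}). -/

import Mathlib

open MeasureTheory
open scoped ENNReal

noncomputable def quadForm2 (A : Matrix (Fin 2) (Fin 2) ℝ) (x : Fin 2 → ℝ) : ℝ :=
  ∑ i, ∑ j, A i j * x i * x j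

noncomputable def Ucex (x : Fin 2 → ℝ) : ℝ :=
  if |x 0| * |x 1| ≤ 1 then |x 0| ^ 4 else (|x 1| ^ 4)⁻¹

noncomputable def Zcex (A : Matrix (Fin 2) (Fin 2) ℝ) (U : (Fin 2 → ℝ) → ℝ) : ℝ≥0∞ :=
  ∫⁻ x : Fin 2 → ℝ, ENNReal.ofReal (Real.exp (-(1 / 2) * quadForm2 A x - U x))

/-!
Under `U ∘ P` the potential is `|x₀|⁴`, so the integrand factors as
`exp (-|x₀|⁴) * exp (-x₁² / 2)`, a product of integrable functions (`|y|⁴ ≥ y² - 1`).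
Under `U ∘ diag(1, t)` with `t > 0`, as soon as `|x₀| * t|x₁| > 1` the cutoff branch
`(t|x₁|)⁻⁴` is active and no longer decays in `x₀`: on the half-strip `x₀ > t⁻¹, 1 ≤ x₁ ≤ 2`
the integrand is at least `exp (-2 - t⁻⁴)`, and that half-strip has infinite area.
-/

open Real Set

lemma quadForm2_diagonal (d : Fin 2 → ℝ) (x : Fin 2 → ℝ) :
    quadForm2 (Matrix.diagonal d) x = d 0 * x 0 ^ 2 + d 1 * x 1 ^ 2 := by
  simp [quadForm2, Fin.sum_univ_two, Matrix.diagonal_apply, sq, mul_assoc]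

lemma Ucex_of_abs_mul_le_one {x : Fin 2 → ℝ} (hx : |x 0| * |x 1| ≤ 1) :
    Ucex x = |x 0| ^ 4 :=
  if_pos hx

lemma Ucex_of_one_lt_abs_mul {x : Fin 2 → ℝ} (hx : 1 < |x 0| * |x 1|) :
    Ucex x = (|x 1| ^ 4)⁻¹ :=
  if_neg hx.not_ge

lemma integrable_exp_neg_abs_pow {n : ℕ} (hn : 2 ≤ n) :
    Integrable fun y : ℝ => exp (-|y| ^ n) := by
  have hsq_le (y : ℝ) : y ^ 2 ≤ |y| ^ n + 1 := by
    rw [← sq_abs]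
    rcases le_total |y| 1 with hy | hy
    · nlinarith [abs_nonneg y, pow_nonneg (abs_nonneg y) n]
    · linarith [pow_le_pow_right₀ hy hn]
  refine ((integrable_exp_neg_mul_sq one_pos).const_mul (exp 1)).mono'
    (by fun_prop) (Filter.Eventually.of_forall fun y => ?_)
  rw [norm_of_nonneg (exp_pos _).le, ← exp_add]
  exact exp_le_exp.mpr (by linarith [hsq_le y])

lemma lintegral_eq_top_of_le_on {α : Type*} [MeasurableSpace α] {μ : Measure α}
    {f : α → ℝ≥0∞} {s : Set α} {c : ℝ≥0∞} (hs : MeasurableSet s) (hμs : μ s = ⊤)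
    (hc : c ≠ 0) (hf : ∀ x ∈ s, c ≤ f x) : ∫⁻ x, f x ∂μ = ⊤ :=
  eq_top_iff.mpr <| calc
    ⊤ = ∫⁻ _ in s, c ∂μ := by rw [setLIntegral_const, hμs, ENNReal.mul_top hc]
    _ ≤ ∫⁻ x in s, f x ∂μ := setLIntegral_mono' hs hf
    _ ≤ ∫⁻ x, f x ∂μ := setLIntegral_le_lintegral s f

lemma Zcex_comp_diagonal_one_zero_ne_top :
    Zcex (Matrix.diagonal ![0, 1]) (fun x => Ucex ((Matrix.diagonal ![1, 0]).mulVec x)) ≠ ⊤ := by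
  let g : Fin 2 → ℝ → ℝ := ![fun y => exp (-|y| ^ 4), fun y => exp (-(1 / 2) * y ^ 2)]
  have hg : ∀ i, Integrable (g i) := Fin.forall_fin_two.mpr
    ⟨integrable_exp_neg_abs_pow (by norm_num), integrable_exp_neg_mul_sq (by norm_num)⟩
  have hintegrand (x : Fin 2 → ℝ) :
      exp (-(1 / 2) * quadForm2 (Matrix.diagonal ![0, 1]) x
        - Ucex ((Matrix.diagonal ![1, 0]).mulVec x)) = ∏ i, g i (x i) := by
    rw [Ucex_of_abs_mul_le_one (by simp [Matrix.mulVec_diagonal]), quadForm2_diagonal,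
      Fin.prod_univ_two]
    simp [g, Matrix.mulVec_diagonal, ← exp_add]
    ring_nf
  simp only [Zcex, hintegrand]
  exact (Integrable.fintype_prod hg).lintegral_lt_top.ne

lemma Ucex_diagonal_one_mulVec_le {t : ℝ} (ht : 0 < t) {x : Fin 2 → ℝ} (hx0 : t⁻¹ < x 0)
    (hx1 : 1 ≤ x 1) : Ucex ((Matrix.diagonal ![1, t]).mulVec x) ≤ (t ^ 4)⁻¹ := by
  have ht_le : t ≤ t * x 1 := le_mul_of_one_le_right ht.le hx1
  have hv : (Matrix.diagonal ![1, t]).mulVec x = ![x 0, t * x 1] := by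
    ext i; fin_cases i <;> simp [Matrix.mulVec_diagonal]
  have hprod : 1 < |x 0| * |t * x 1| := by
    rw [abs_of_pos ((inv_pos.mpr ht).trans hx0), abs_of_pos (ht.trans_le ht_le)]
    calc 1 = t⁻¹ * t := (inv_mul_cancel₀ ht.ne').symm
      _ < x 0 * (t * x 1) := mul_lt_mul hx0 ht_le ht ((inv_pos.mpr ht).trans hx0).le
  rw [hv, Ucex_of_one_lt_abs_mul hprod]
  simp only [Matrix.cons_val_one, Matrix.cons_val_zero, abs_of_pos (ht.trans_le ht_le)]
  gcongr

lemma Zcex_comp_diagonal_one_pos_eq_top {t : ℝ} (ht : 0 < t) :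
    Zcex (Matrix.diagonal ![0, 1]) (fun x => Ucex ((Matrix.diagonal ![1, t]).mulVec x)) = ⊤ := by
  let S : Set (Fin 2 → ℝ) := univ.pi ![Ioi t⁻¹, Icc 1 2]
  have hS : MeasurableSet S :=
    MeasurableSet.univ_pi (Fin.forall_fin_two.mpr ⟨measurableSet_Ioi, measurableSet_Icc⟩)
  have hvol : volume S = ⊤ := by
    simp [S, volume_pi_pi, Fin.prod_univ_two, Real.volume_Ioi, Real.volume_Icc]
  refine lintegral_eq_top_of_le_on hS hvol (c := ENNReal.ofReal (exp (-2 - (t ^ 4)⁻¹)))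
    (by simp [exp_pos]) fun x hx => ENNReal.ofReal_le_ofReal (exp_le_exp.mpr ?_)
  obtain ⟨hx0, hx1, hx1'⟩ : t⁻¹ < x 0 ∧ 1 ≤ x 1 ∧ x 1 ≤ 2 := by
    simpa [S, Fin.forall_fin_two] using hx
  have hU := Ucex_diagonal_one_mulVec_le ht hx0 hx1
  rw [quadForm2_diagonal]
  simp only [Matrix.cons_val_zero, Matrix.cons_val_one]
  nlinarith

/-- with `A = diag(0,1)`, `P = diag(1,0)`, `T_j = diag(1, j⁻¹)`, the
partition function of `U∘P` is finite but that of `U∘T_j` is infinite for every `j ≥ 1`,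
so pointwise convergence of `Z[·, U∘T_j]` to `Z[·, U∘P]` fails. -/
theorem cex_no_pointwise_convergence :
    letI A : Matrix (Fin 2) (Fin 2) ℝ := Matrix.diagonal ![0, 1]
    letI P : Matrix (Fin 2) (Fin 2) ℝ := Matrix.diagonal ![1, 0]
    letI T : ℕ → Matrix (Fin 2) (Fin 2) ℝ := fun j => Matrix.diagonal ![1, (j : ℝ)⁻¹]
    Zcex A (fun x => Ucex (P.mulVec x)) ≠ ⊤ ∧
    ∀ j : ℕ, 1 ≤ j → Zcex A (fun x => Ucex ((T j).mulVec x)) = ⊤ :=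
  ⟨Zcex_comp_diagonal_one_zero_ne_top,
    fun _ hj => Zcex_comp_diagonal_one_pos_eq_top (by positivity)⟩
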